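/- Matrix elements of the B-operator of the t-deformed boson model: let M ≥ 1, N ≥ 0, t, β, v ∈ ℂ, and let m ∈ ℕ^M with ∑ m_j = N+1 and n ∈ ℕ^M with ∑ n_j = N. Then (i) ⟨m| B(v) |n⟩ = 0 unless 0 ≤ ∑_{k=j}^M m_k − ∑_{k=j}^M n_k ≤ 1 for all 1 ≤ j ≤ M (admissibility); and (ii) if m and n are admissible, let p₁ < ⋯ < p_r be the indices p with m_p = n_p + 1 and q₁ < ⋯ < q_{r−1} the indices q with m_q + 1 = n_q, and set q_r = M+1; then ⟨m| B(v) |n⟩ = v^{∑_{j=1}^r p_j − ∑_{j=1}^{r−1} q_j} · ∏_{j=1}^r (1 − t^{n_{p_j}+1}) · ∏_{j=1}^r ∏_{k=p_j+1}^{q_j−1} (1 − βv t^{n_k}). -/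

import Mathlib

noncomputable section

/-- The space ℂ²_a ⊗ F^{⊗M}, where F is the Fock space of finitely supported
functions ℕ → ℂ, realized as finitely supported functions on the basis index
set (Fin 2) × (Fin M → ℕ). -/
abbrev AuxFock (M : ℕ) : Type := (Fin 2 × (Fin M → ℕ)) →₀ ℂ

/-- The t-boson L-operator L(v) = [[1 − βv·t^N, v·B†],[B, v·id]] acting on the
auxiliary space ℂ²_a and the j-th Fock factor of F^{⊗M}. -/
def LsiteBoson (M : ℕ) (t β v : ℂ) (j : Fin M) :
    Module.End ℂ (AuxFock M) :=
  Finsupp.lift (AuxFock M) ℂ (Fin 2 × (Fin M → ℕ))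
    (fun p =>
      if p.1 = 0 then
        (1 - β * v * t ^ (p.2 j)) • Finsupp.single ((0 : Fin 2), p.2) (1 : ℂ) +
          (if p.2 j = 0 then 0 else
            Finsupp.single ((1 : Fin 2), Function.update p.2 j (p.2 j - 1)) (1 : ℂ))
      else
        (v * (1 - t ^ (p.2 j + 1))) •
            Finsupp.single ((0 : Fin 2), Function.update p.2 j (p.2 j + 1)) (1 : ℂ) +
          v • Finsupp.single ((1 : Fin 2), p.2) (1 : ℂ))

/-- The monodromy matrix T_a(v) = L_{aM}(v) ∘ ⋯ ∘ L_{a1}(v) (site 1 acts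
first) of the t-deformed boson model. -/
def TmonoBoson (M : ℕ) (t β v : ℂ) : Module.End ℂ (AuxFock M) :=
  (List.ofFn fun k : Fin M => LsiteBoson M t β v k.rev).prod

/-- The matrix element ⟨m| B(v) |n⟩ of B(v) = ⟨0|_a T_a(v) |1⟩_a. -/
def Belem (M : ℕ) (t β v : ℂ) (m n : Fin M → ℕ) : ℂ :=
  (TmonoBoson M t β v (Finsupp.single ((1 : Fin 2), n) (1 : ℂ))) ((0 : Fin 2), m)

/-- The admissibility condition on a pair of particle configurations. -/
def Admissible (M : ℕ) (m n : Fin M → ℕ) : Prop :=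
  ∀ j : Fin M,
    (∑ k ∈ Finset.Ici j, n k) ≤ (∑ k ∈ Finset.Ici j, m k) ∧
      (∑ k ∈ Finset.Ici j, m k) ≤ (∑ k ∈ Finset.Ici j, n k) + 1

/-!
Each L-operator acts on its own site only and conserves the auxiliary spin plus the occupation
of that site. Reading ⟨m| B(v) |n⟩ site by site, the auxiliary spin entering site k is therefore
forced to be the excess ∑_{i ≥ k} (m_i − n_i): the matrix element vanishes unless this is 0 or 1
everywhere, which is admissibility, and otherwise it is a product of one entry of L(v) per site.
That entry is v(1 − t^{n+1}) where the spin drops from 1 to 0 (the sites p_j), 1 where it rises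
(the sites q_j), v where it stays 1, and 1 − βv t^n where it stays 0, which happens exactly
strictly between p_j and the next q_j.
-/

@[to_additive]
lemma Finset.prod_comp_eq_prod_filter {ι κ α : Type*} [Fintype ι] [Fintype κ] [DecidableEq κ]
    [CommMonoid α] {f : ι → κ} (hf : Function.Injective f) {P : κ → Prop} [DecidablePred P]
    (hfP : ∀ i, (∃ j, f j = i) ↔ P i) (g : κ → α) :
    ∏ j, g (f j) = ∏ i with P i, g i := by
  have : Finset.univ.filter P = Finset.univ.image f := by
    ext i
    simp [← hfP]
  rw [this, Finset.prod_image fun _ _ _ _ h => hf h]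

open scoped Finset in
lemma Fin.card_filter_le_and_lt {r a b : ℕ} (hb : b ≤ r) :
    #{j : Fin r | a ≤ (j : ℕ) ∧ (j : ℕ) < b} = b - a := by
  rw [← Finset.card_map Fin.valEmbedding, ← Nat.card_Ico]
  congr 1
  ext i
  simp only [Finset.mem_map, Finset.mem_filter, Finset.mem_univ, true_and, Fin.valEmbedding_apply,
    Finset.mem_Ico]
  exact ⟨fun ⟨j, hj, hji⟩ => hji ▸ hj, fun h => ⟨⟨i, by omega⟩, h, rfl⟩⟩

namespace TBoson

open Finset

variable {M : ℕ} (t β v : ℂ)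

/-- Entry `(a', a)` is the coefficient of `|a', x + a - a'⟩` in `L(v) |a, x⟩`. -/
def lMatrix (x : ℕ) : Matrix (Fin 2) (Fin 2) ℂ :=
  !![1 - β * v * t ^ x, v * (1 - t ^ (x + 1)); if x = 0 then 0 else 1, v]

lemma LsiteBoson_single (j : Fin M) (a : Fin 2) (s : Fin M → ℕ) :
    LsiteBoson M t β v j (Finsupp.single (a, s) 1) =
      ∑ a' : Fin 2, lMatrix t β v (s j) a' a •
        Finsupp.single (a', Function.update s j (s j + a - a')) 1 := by
  rw [LsiteBoson, Finsupp.lift_apply, Finsupp.sum_single_index (by simp), one_smul,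
    Fin.sum_univ_two]
  obtain rfl | rfl : a = 0 ∨ a = 1 := by omega
  · simp only [lMatrix, if_true, Matrix.of_apply, Matrix.cons_val', Matrix.cons_val_zero,
      Matrix.cons_val_one, Matrix.empty_val', Matrix.cons_val_fin_one, Fin.val_zero, Fin.val_one,
      add_zero, Nat.sub_zero, Function.update_eq_self]
    split_ifs <;> simp
  · simp only [lMatrix, one_ne_zero, if_false, Matrix.of_apply, Matrix.cons_val', Matrix.cons_val_zero,
      Matrix.cons_val_one, Matrix.empty_val', Matrix.cons_val_fin_one, Fin.val_zero, Fin.val_one,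
      Nat.sub_zero, Nat.add_sub_cancel, Function.update_eq_self]

/-- The factors of `T_a(v)` at the (0-based) sites `j, …, M - 1`. -/
def tailMonodromy (j : ℕ) : Module.End ℂ (AuxFock M) :=
  ((List.ofFn fun k : Fin M => LsiteBoson M t β v k.rev).take (M - j)).prod

lemma tailMonodromy_zero : tailMonodromy (M := M) t β v 0 = TmonoBoson M t β v := by
  rw [tailMonodromy, TmonoBoson, Nat.sub_zero, List.take_of_length_le (by simp)]

lemma tailMonodromy_of_le {j : ℕ} (hj : M ≤ j) : tailMonodromy (M := M) t β v j = 1 := by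
  simp [tailMonodromy, Nat.sub_eq_zero_of_le hj]

lemma tailMonodromy_succ {j : ℕ} (hj : j < M) :
    tailMonodromy (M := M) t β v j = tailMonodromy t β v (j + 1) * LsiteBoson M t β v ⟨j, hj⟩ := by
  set l := List.ofFn fun k : Fin M => LsiteBoson M t β v k.rev
  have hlen : M - (j + 1) < l.length := by simp [l]; omega
  rw [tailMonodromy, tailMonodromy, show M - j = M - (j + 1) + 1 by omega,
    ← List.take_concat_get hlen, List.concat_eq_append, List.prod_append, List.prod_singleton]
  simp only [l, List.getElem_ofFn]
  congr 2
  ext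
  simp [Fin.rev]
  omega

def agreeBelow (s : Fin M → ℕ) (j : ℕ) : Set (Fin 2 × (Fin M → ℕ)) :=
  {x | ∀ i : Fin M, (i : ℕ) < j → x.2 i = s i}

lemma supported_le_comap_LsiteBoson (s : Fin M → ℕ) {j : ℕ} (k : Fin M) (hk : j ≤ k) :
    Finsupp.supported ℂ ℂ (agreeBelow s j) ≤
      (Finsupp.supported ℂ ℂ (agreeBelow s j)).comap (LsiteBoson M t β v k) := by
  rw [Finsupp.supported_eq_span_single, Submodule.span_le]
  rintro _ ⟨⟨a, s'⟩, hs', rfl⟩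
  rw [SetLike.mem_coe, Submodule.mem_comap, LsiteBoson_single, ← Finsupp.supported_eq_span_single]
  refine Submodule.sum_mem _ fun a' _ => Submodule.smul_mem _ _ (Finsupp.single_mem_supported ℂ 1 ?_)
  intro i hi
  dsimp only
  rw [Function.update_of_ne (by rintro rfl; omega)]
  exact hs' i hi

lemma supported_le_comap_tailMonodromy (s : Fin M → ℕ) (j : ℕ) :
    Finsupp.supported ℂ ℂ (agreeBelow s j) ≤
      (Finsupp.supported ℂ ℂ (agreeBelow s j)).comap (tailMonodromy t β v j) := by
  rcases le_or_gt M j with hMj | hjM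
  · rw [tailMonodromy_of_le t β v hMj]
    exact fun _ hx => hx
  refine Nat.decreasingInduction' (P := fun l => _ ≤ (Finsupp.supported ℂ ℂ (agreeBelow s j)).comap
    (tailMonodromy t β v l)) (fun l hlM hjl ih => ?_) hjM.le
    (by rw [tailMonodromy_of_le t β v le_rfl]; exact fun _ hx => hx)
  rw [tailMonodromy_succ t β v hlM, Module.End.mul_eq_comp, Submodule.comap_comp]
  exact (supported_le_comap_LsiteBoson t β v s ⟨l, hlM⟩ hjl).trans (Submodule.comap_mono ih)

lemma tailMonodromy_single_apply_of_ne (m s : Fin M → ℕ) {j : ℕ} (a b : Fin 2) (i : Fin M)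
    (hij : (i : ℕ) < j) (hne : s i ≠ m i) :
    tailMonodromy t β v j (Finsupp.single (a, s) 1) (b, m) = 0 := by
  have hsupp := supported_le_comap_tailMonodromy t β v s j
    (Finsupp.single_mem_supported ℂ (1 : ℂ) (a := (a, s)) fun _ _ => rfl)
  by_contra h
  exact hne ((Finsupp.mem_supported ℂ _).mp hsupp (Finsupp.mem_support_iff.mpr h) i hij).symm

variable (m n : Fin M → ℕ)

def splice (j : ℕ) : Fin M → ℕ := fun i => if (i : ℕ) < j then m i else n i

lemma update_splice {j : ℕ} (hj : j < M) :
    Function.update (splice m n j) ⟨j, hj⟩ (m ⟨j, hj⟩) = splice m n (j + 1) := by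
  ext i
  rcases eq_or_ne i ⟨j, hj⟩ with rfl | hi
  · simp [splice]
  · have : (i : ℕ) ≠ j := fun h => hi (Fin.ext h)
    simp only [Function.update_of_ne hi, splice]
    split_ifs <;> first | rfl | omega

def chainElem (j : ℕ) (b : Fin 2) : ℂ :=
  tailMonodromy t β v j (Finsupp.single (b, splice m n j) 1) (0, m)

lemma Belem_eq_chainElem : Belem M t β v m n = chainElem t β v m n 0 1 := by
  have : splice m n 0 = n := by ext; simp [splice]
  rw [Belem, chainElem, tailMonodromy_zero, this]

lemma chainElem_of_le {j : ℕ} (hj : M ≤ j) (b : Fin 2) :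
    chainElem t β v m n j b = if b = 0 then 1 else 0 := by
  have : splice m n j = m := by ext i; simp [splice, i.isLt.trans_le hj]
  rw [chainElem, tailMonodromy_of_le t β v hj, this, Module.End.one_apply,
    Finsupp.single_apply]
  simp

lemma chainElem_succ {j : ℕ} (hj : j < M) (b : Fin 2) :
    chainElem t β v m n j b = ∑ a : Fin 2,
      (if n ⟨j, hj⟩ + b = m ⟨j, hj⟩ + a then lMatrix t β v (n ⟨j, hj⟩) a b else 0) *
        chainElem t β v m n (j + 1) a := by
  have hself : splice m n j ⟨j, hj⟩ = n ⟨j, hj⟩ := by simp [splice]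
  rw [chainElem, tailMonodromy_succ t β v hj, Module.End.mul_apply, LsiteBoson_single, map_sum,
    Finsupp.finsetSum_apply, hself]
  refine Finset.sum_congr rfl fun a _ => ?_
  rw [map_smul, Finsupp.smul_apply, smul_eq_mul]
  split_ifs with hcons
  · rw [show n ⟨j, hj⟩ + b - a = m ⟨j, hj⟩ by omega, update_splice, chainElem]
  · rcases eq_or_ne (n ⟨j, hj⟩ + b - a) (m ⟨j, hj⟩) with hsub | hsub
    -- the subtraction truncates only for `B |0⟩ = 0`
    · have : n ⟨j, hj⟩ = 0 ∧ b = 0 ∧ a = 1 := by omega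
      obtain ⟨hn, rfl, rfl⟩ := this
      simp [lMatrix, hn]
    · rw [tailMonodromy_single_apply_of_ne t β v m _ _ _ ⟨j, hj⟩ (Nat.lt_succ_self j)
        (by simpa using hsub), mul_zero, zero_mul]

def tailSites (M k : ℕ) : Finset (Fin M) := univ.filter fun i => k ≤ (i : ℕ)

lemma tailSites_of_le {k : ℕ} (hk : M ≤ k) : tailSites M k = ∅ :=
  filter_false_of_mem fun i _ => by omega

lemma tailSites_succ {k : ℕ} (hk : k < M) :
    tailSites M k = insert ⟨k, hk⟩ (tailSites M (k + 1)) := by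
  ext i
  simp only [tailSites, mem_filter, mem_univ, true_and, mem_insert, Fin.ext_iff]
  omega

lemma mk_notMem_tailSites_succ {k : ℕ} (hk : k < M) : (⟨k, hk⟩ : Fin M) ∉ tailSites M (k + 1) := by
  simp [tailSites]

lemma Ici_eq_tailSites (j : Fin M) : Ici j = tailSites M j := by
  ext i
  simp only [mem_Ici, tailSites, mem_filter, mem_univ, true_and, Fin.le_def]

/-- The auxiliary spin forced, by conservation, to enter site `k`. -/
def flux (k : ℕ) : ℤ := ∑ i ∈ tailSites M k, ((m i : ℤ) - n i)

lemma flux_of_le {k : ℕ} (hk : M ≤ k) : flux m n k = 0 := by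
  rw [flux, tailSites_of_le hk, sum_empty]

lemma flux_succ {k : ℕ} (hk : k < M) :
    flux m n k = (m ⟨k, hk⟩ : ℤ) - n ⟨k, hk⟩ + flux m n (k + 1) := by
  rw [flux, tailSites_succ hk, sum_insert (mk_notMem_tailSites_succ hk), flux]

lemma flux_zero : flux m n 0 = ∑ i, (m i : ℤ) - ∑ i, (n i : ℤ) := by
  rw [flux, ← sum_sub_distrib, show tailSites M 0 = univ by ext; simp [tailSites]]

lemma admissible_iff_flux : Admissible M m n ↔ ∀ k, 0 ≤ flux m n k ∧ flux m n k ≤ 1 := by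
  refine ⟨fun hA k => ?_, fun h j => ?_⟩
  · rcases lt_or_ge k M with hk | hk
    · have := hA ⟨k, hk⟩
      simp only [Ici_eq_tailSites] at this
      simp only [flux, sum_sub_distrib, ← Nat.cast_sum]
      omega
    · simp [flux_of_le m n hk]
  · have := h j
    simp only [flux, sum_sub_distrib, ← Nat.cast_sum, ← Ici_eq_tailSites] at this
    omega

def siteWeight (k : Fin M) : ℂ :=
  v ^ (flux m n k).toNat * (if m k = n k + 1 then 1 - t ^ (n k + 1) else 1) *
    if flux m n k = 0 ∧ flux m n (k + 1) = 0 then 1 - β * v * t ^ n k else 1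

lemma lMatrix_of_conserved {x x' : ℕ} {a b : Fin 2} (h : x + b = x' + a) :
    lMatrix t β v x a b = v ^ (b : ℕ) * (if x' = x + 1 then 1 - t ^ (x + 1) else 1) *
      if b = 0 ∧ a = 0 then 1 - β * v * t ^ x else 1 := by
  fin_cases a <;> fin_cases b <;> simp at h <;> subst h <;> simp [lMatrix, add_assoc]

lemma flux_of_chainElem_ne_zero {j : ℕ} (hj : j ≤ M) {b : Fin 2}
    (h : chainElem t β v m n j b ≠ 0) :
    (∀ k, j ≤ k → 0 ≤ flux m n k ∧ flux m n k ≤ 1) ∧ flux m n j = b := by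
  induction hj using Nat.decreasingInduction generalizing b with
  | self =>
    rw [chainElem_of_le t β v m n le_rfl] at h
    obtain rfl : b = 0 := by by_contra hb; simp [hb] at h
    exact ⟨fun k hk => by simp [flux_of_le m n hk], by simp [flux_of_le m n le_rfl]⟩
  | of_succ j hj ih =>
    rw [chainElem_succ t β v m n hj] at h
    obtain ⟨a, -, ha⟩ := exists_ne_zero_of_sum_ne_zero h
    have hcons : n ⟨j, hj⟩ + b = m ⟨j, hj⟩ + a := by
      by_contra hc
      simp [hc] at ha
    obtain ⟨htail, hflux⟩ := ih (right_ne_zero_of_mul ha)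
    have hfluxj : flux m n j = b := by
      rw [flux_succ m n hj, hflux]
      omega
    refine ⟨fun k hk => ?_, hfluxj⟩
    rcases hk.eq_or_lt with rfl | hk
    · have := b.isLt
      omega
    · exact htail k hk

lemma chainElem_eq_prod (hA : ∀ k, 0 ≤ flux m n k ∧ flux m n k ≤ 1) {j : ℕ} (hj : j ≤ M)
    {b : Fin 2} (hb : flux m n j = b) :
    chainElem t β v m n j b = ∏ k ∈ tailSites M j, siteWeight t β v m n k := by
  induction hj using Nat.decreasingInduction generalizing b with
  | self =>
    obtain rfl : b = 0 := by
      rw [flux_of_le m n le_rfl] at hb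
      omega
    rw [chainElem_of_le t β v m n le_rfl, tailSites_of_le le_rfl, prod_empty, if_pos rfl]
  | of_succ j hj ih =>
    obtain ⟨a, ha⟩ : ∃ a : Fin 2, flux m n (j + 1) = a :=
      ⟨⟨(flux m n (j + 1)).toNat, by have := hA (j + 1); omega⟩, by have := hA (j + 1); simp; omega⟩
    rw [chainElem_succ t β v m n hj, sum_eq_single a, ih ha, tailSites_succ hj,
      prod_insert (mk_notMem_tailSites_succ hj)]
    · have hcons : n ⟨j, hj⟩ + b = m ⟨j, hj⟩ + a := by
        have := flux_succ m n hj
        omega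
      rw [if_pos hcons, lMatrix_of_conserved t β v hcons, siteWeight]
      simp only [hb, ha, Int.toNat_natCast, Nat.cast_eq_zero, Fin.val_eq_zero_iff]
    · intro a' _ ha'
      suffices chainElem t β v m n (j + 1) a' = 0 by rw [this, mul_zero]
      by_contra h
      have := (flux_of_chainElem_ne_zero t β v m n hj h).2
      exact ha' (Fin.ext (by exact_mod_cast this.symm.trans ha))
    · simp

lemma Belem_eq_zero_of_not_admissible (h : ¬ Admissible M m n) : Belem M t β v m n = 0 := by
  by_contra hB
  rw [Belem_eq_chainElem] at hB
  exact h ((admissible_iff_flux m n).mpr fun k =>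
    (flux_of_chainElem_ne_zero t β v m n (Nat.zero_le M) hB).1 k (Nat.zero_le k))

lemma Belem_eq_prod_siteWeight (hA : Admissible M m n) (h0 : flux m n 0 = 1) :
    Belem M t β v m n = ∏ k, siteWeight t β v m n k := by
  rw [Belem_eq_chainElem, chainElem_eq_prod t β v m n ((admissible_iff_flux m n).mp hA)
    (Nat.zero_le M) (by simpa using h0)]
  congr
  ext
  simp [tailSites]

variable {r : ℕ}

def countGe (f : Fin r → Fin M) (k : ℕ) : ℕ := #{j | k ≤ (f j : ℕ)}

lemma card_lt_add_countGe (f : Fin r → Fin M) (k : ℕ) : #{j | (f j : ℕ) < k} + countGe f k = r := by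
  simpa [countGe, not_lt] using
    card_filter_add_card_filter_not (s := univ) fun j : Fin r => (f j : ℕ) < k

lemma sum_countGe (f : Fin r → Fin M) : ∑ k : Fin M, countGe f k = ∑ j, ((f j : ℕ) + 1) := by
  simp only [countGe, card_eq_sum_ones, sum_filter]
  rw [sum_comm]
  refine sum_congr rfl fun j _ => ?_
  have : univ.filter (fun k : Fin M => (k : ℕ) ≤ f j) = Iic (f j) := by
    ext i
    simp only [mem_filter, mem_univ, true_and, mem_Iic, Fin.le_def]
  rw [← sum_filter, ← card_eq_sum_ones, this, Fin.card_Iic]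

lemma countGe_eq_sum {f : Fin r → Fin M} (hf : Function.Injective f) {P : Fin M → Prop}
    [DecidablePred P] (hfP : ∀ i, (∃ j, f j = i) ↔ P i) (k : ℕ) :
    countGe f k = ∑ i ∈ tailSites M k, if P i then 1 else 0 := by
  rw [countGe, card_eq_sum_ones, sum_filter,
    Finset.sum_comp_eq_sum_filter hf hfP (fun i => if k ≤ (i : ℕ) then 1 else 0), tailSites,
    sum_filter, sum_filter]
  refine sum_congr rfl fun i _ => ?_
  split_ifs <;> rfl

lemma countGe_succ {f : Fin r → Fin M} (hf : Function.Injective f) {P : Fin M → Prop}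
    [DecidablePred P] (hfP : ∀ i, (∃ j, f j = i) ↔ P i) {k : ℕ} (hk : k < M) :
    countGe f k = (if P ⟨k, hk⟩ then 1 else 0) + countGe f (k + 1) := by
  rw [countGe_eq_sum hf hfP, countGe_eq_sum hf hfP, tailSites_succ hk,
    sum_insert (mk_notMem_tailSites_succ hk)]

lemma sub_eq_of_admissible (hA : Admissible M m n) (i : Fin M) :
    (m i : ℤ) - n i = (if m i = n i + 1 then 1 else 0) - (if n i = m i + 1 then 1 else 0) := by
  have hflux := flux_succ m n i.isLt
  simp only [Fin.eta] at hflux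
  have h0 := (admissible_iff_flux m n).mp hA i
  have h1 := (admissible_iff_flux m n).mp hA (i + 1)
  split_ifs <;> omega

lemma flux_eq_countGe_sub (hA : Admissible M m n) {p : Fin r → Fin M} (hp : Function.Injective p)
    (hpP : ∀ i, (∃ j, p j = i) ↔ m i = n i + 1) {q : Fin (r - 1) → Fin M}
    (hq : Function.Injective q) (hqQ : ∀ i, (∃ j, q j = i) ↔ n i = m i + 1) (k : ℕ) :
    flux m n k = countGe p k - countGe q k := by
  rw [flux, countGe_eq_sum hp hpP, countGe_eq_sum hq hqQ]
  push_cast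
  rw [← sum_sub_distrib]
  exact sum_congr rfl fun i _ => sub_eq_of_admissible m n hA i

lemma sum_toNat_flux (hA : Admissible M m n) {p : Fin r → Fin M} (hp : Function.Injective p)
    (hpP : ∀ i, (∃ j, p j = i) ↔ m i = n i + 1) {q : Fin (r - 1) → Fin M}
    (hq : Function.Injective q) (hqQ : ∀ i, (∃ j, q j = i) ↔ n i = m i + 1) :
    ∑ k : Fin M, (flux m n k).toNat = ∑ j, ((p j : ℕ) + 1) - ∑ j, ((q j : ℕ) + 1) := by
  have key : ∑ k : Fin M, ((flux m n k).toNat : ℤ) = ∑ k : Fin M, ((countGe p k : ℤ) - countGe q k) :=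
    sum_congr rfl fun k _ => by
      rw [Int.toNat_of_nonneg ((admissible_iff_flux m n).mp hA k).1,
        flux_eq_countGe_sub m n hA hp hpP hq hqQ]
  rw [sum_sub_distrib, ← Nat.cast_sum, ← Nat.cast_sum, ← Nat.cast_sum, sum_countGe,
    sum_countGe] at key
  omega

lemma card_gaps_containing (hA : Admissible M m n) (h0 : flux m n 0 = 1) {p : Fin r → Fin M}
    (hp : StrictMono p) (hpP : ∀ i, (∃ j, p j = i) ↔ m i = n i + 1) {q : Fin (r - 1) → Fin M}
    (hq : StrictMono q) (hqQ : ∀ i, (∃ j, q j = i) ↔ n i = m i + 1) (k : Fin M) :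
    #{j : Fin r | (p j : ℕ) < k ∧ (k : ℕ) < if h : (j : ℕ) < r - 1 then (q ⟨j, h⟩ : ℕ) else M} =
      if flux m n k = 0 ∧ flux m n (k + 1) = 0 then 1 else 0 := by
  -- the gaps containing `k` are those with `B ≤ j < A`
  set A := #{j | (p j : ℕ) < k}
  set B := #{j | (q j : ℕ) < k + 1}
  have hpA (j : Fin r) : (p j : ℕ) < k ↔ (j : ℕ) < A :=
    (Fin.lt_card_filter_univ_iff_apply_of_imp (fun i => (p i : ℕ) < k)
      fun _ _ hji h => (hp.monotone hji).trans_lt h).symm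
  have hqB (j : Fin (r - 1)) : (q j : ℕ) < k + 1 ↔ (j : ℕ) < B :=
    (Fin.lt_card_filter_univ_iff_apply_of_imp (fun i => (q i : ℕ) < k + 1)
      fun _ _ hji h => ((Fin.val_strictMono.comp hq).monotone hji).trans_lt h).symm
  have hAr := card_lt_add_countGe p k
  have hBr := card_lt_add_countGe q (k + 1)
  have hgap : (univ.filter fun j : Fin r => (p j : ℕ) < k ∧
        (k : ℕ) < if h : (j : ℕ) < r - 1 then (q ⟨j, h⟩ : ℕ) else M) =
      univ.filter fun j : Fin r => B ≤ (j : ℕ) ∧ (j : ℕ) < A := by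
    ext j
    simp only [mem_filter, mem_univ, true_and, hpA]
    split_ifs with hj
    · have := hqB ⟨j, hj⟩
      dsimp only at this
      omega
    · have := k.isLt
      omega
  rw [hgap, Fin.card_filter_le_and_lt (by omega)]
  have hflux0 := flux_eq_countGe_sub m n hA hp.injective hpP hq.injective hqQ 0
  have hfluxk := flux_eq_countGe_sub m n hA hp.injective hpP hq.injective hqQ k
  have hfluxk1 := flux_eq_countGe_sub m n hA hp.injective hpP hq.injective hqQ (k + 1)
  have hp0 := card_lt_add_countGe p 0
  have hpk := countGe_succ hp.injective hpP k.isLt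
  have hqk := countGe_succ hq.injective hqQ k.isLt
  have hk := (admissible_iff_flux m n).mp hA k
  have hk1 := (admissible_iff_flux m n).mp hA (k + 1)
  simp only [Fin.eta] at hpk hqk
  split_ifs at hpk hqk ⊢ <;> omega

lemma prod_ite_flux_eq_prod_gaps (hA : Admissible M m n) (h0 : flux m n 0 = 1) {p : Fin r → Fin M}
    (hp : StrictMono p) (hpP : ∀ i, (∃ j, p j = i) ↔ m i = n i + 1) {q : Fin (r - 1) → Fin M}
    (hq : StrictMono q) (hqQ : ∀ i, (∃ j, q j = i) ↔ n i = m i + 1) {α : Type*} [CommMonoid α]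
    (g : Fin M → α) :
    ∏ k : Fin M, (if flux m n k = 0 ∧ flux m n (k + 1) = 0 then g k else 1) =
      ∏ j : Fin r, ∏ k : Fin M,
        if (p j : ℕ) < k ∧ (k : ℕ) < (if h : (j : ℕ) < r - 1 then (q ⟨j, h⟩ : ℕ) else M)
        then g k else 1 := by
  rw [prod_comm]
  refine prod_congr rfl fun k _ => ?_
  rw [prod_ite, prod_const_one, mul_one, prod_const, card_gaps_containing m n hA h0 hp hpP hq hqQ]
  split_ifs <;> simp

end TBoson

theorem tboson_B_matrix_elements_general (M N : ℕ) (t β v : ℂ)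
    (m n : Fin M → ℕ)
    (hm : ∑ j : Fin M, m j = N + 1) (hn : ∑ j : Fin M, n j = N) :
    (¬ Admissible M m n → Belem M t β v m n = 0) ∧
      (∀ (r : ℕ) (p : Fin r → Fin M) (q : Fin (r - 1) → Fin M),
        Admissible M m n →
        StrictMono p → (∀ i : Fin M, (∃ j, p j = i) ↔ m i = n i + 1) →
        StrictMono q → (∀ i : Fin M, (∃ j, q j = i) ↔ n i = m i + 1) →
        Belem M t β v m n =
          v ^ ((∑ j : Fin r, ((p j : ℕ) + 1)) - (∑ j : Fin (r - 1), ((q j : ℕ) + 1))) *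
            (∏ j : Fin r, (1 - t ^ (n (p j) + 1))) *
            ∏ j : Fin r, ∏ k : Fin M,
              if (p j : ℕ) < (k : ℕ) ∧
                  (k : ℕ) < (if h : (j : ℕ) < r - 1 then ((q ⟨(j : ℕ), h⟩ : ℕ)) else M)
              then (1 - β * v * t ^ (n k)) else 1) := by
  refine ⟨TBoson.Belem_eq_zero_of_not_admissible t β v m n, fun r p q hA hp hpP hq hqQ => ?_⟩
  have h0 : TBoson.flux m n 0 = 1 := by
    rw [TBoson.flux_zero, ← Nat.cast_sum, ← Nat.cast_sum, hm, hn]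
    push_cast
    ring
  have hsites : ∏ k, (if m k = n k + 1 then 1 - t ^ (n k + 1) else 1) =
      ∏ j, (1 - t ^ (n (p j) + 1)) := by
    rw [← Finset.prod_filter]
    exact (Finset.prod_comp_eq_prod_filter hp.injective hpP _).symm
  rw [TBoson.Belem_eq_prod_siteWeight t β v m n hA h0]
  simp only [TBoson.siteWeight, Finset.prod_mul_distrib, Finset.prod_pow_eq_pow_sum]
  rw [TBoson.sum_toNat_flux m n hA hp.injective hpP hq.injective hqQ, hsites,
    TBoson.prod_ite_flux_eq_prod_gaps m n hA h0 hp hpP hq hqQ]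

/-- Matrix elements of the B-operator of the t-deformed boson model:
(i) ⟨m|B(v)|n⟩ vanishes unless (m,n) is admissible; (ii) if (m,n) is
admissible, then ⟨m|B(v)|n⟩ is given by the explicit product formula, where
p₁ < ⋯ < p_r enumerates the (1-based) sites with m_p = n_p + 1, the sequence
q₁ < ⋯ < q_{r−1} enumerates the sites with m_q + 1 = n_q, and q_r = M + 1. -/
theorem tboson_B_matrix_elements (M N : ℕ) (hM : 1 ≤ M) (t β v : ℂ)
    (m n : Fin M → ℕ)
    (hm : ∑ j : Fin M, m j = N + 1) (hn : ∑ j : Fin M, n j = N) :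
    (¬ Admissible M m n → Belem M t β v m n = 0) ∧
      (∀ (r : ℕ) (p : Fin r → Fin M) (q : Fin (r - 1) → Fin M),
        Admissible M m n →
        StrictMono p → (∀ i : Fin M, (∃ j, p j = i) ↔ m i = n i + 1) →
        StrictMono q → (∀ i : Fin M, (∃ j, q j = i) ↔ n i = m i + 1) →
        Belem M t β v m n =
          v ^ ((∑ j : Fin r, ((p j : ℕ) + 1)) - (∑ j : Fin (r - 1), ((q j : ℕ) + 1))) *
            (∏ j : Fin r, (1 - t ^ (n (p j) + 1))) *
            ∏ j : Fin r, ∏ k : Fin M,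
              if (p j : ℕ) < (k : ℕ) ∧
                  (k : ℕ) < (if h : (j : ℕ) < r - 1 then ((q ⟨(j : ℕ), h⟩ : ℕ)) else M)
              then (1 - β * v * t ^ (n k)) else 1) :=
  tboson_B_matrix_elements_general M N t β v m n hm hn
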